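/- arXiv:2309.16416 — 4 statements merged into one kernel-verified Lean document; each statement's English description precedes it below -/
import Mathlib

section
/- Let q : V → S_ℂ^d be a complex-spherical realisation (‖q_v‖² = 1 for all v) with [q_v]_{d+1} ≠ 0 for all v, and define p : V → ℂ^d by [p_v]_i = [q_v]_i / [q_v]_{d+1} for i = 1,...,d. For any u : V → ℂ^{d+1} with u_v · q_v = 0 for all v, define φ(u)_v = ([u_v]_1/[q_v]_{d+1}, ..., [u_v]_d/[q_v]_{d+1}). Then for every pair v, w: (p_v - p_w)·(φ(u)_v - φ(u)_w) = -(q_v·u_w + q_w·u_v)/([q_v]_{d+1}[q_w]_{d+1}). -/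
/-- Central projection from the complexified sphere: the Euclidean edge derivative of the
projected realisation equals (up to the stated factor) the spherical edge derivative. -/
theorem stmt10 {V : Type*} (d : ℕ) (q : V → Fin (d + 1) → ℂ)
    (hsphere : ∀ v, (∑ i, q v i * q v i) = 1)
    (hlast : ∀ v, q v (Fin.last d) ≠ 0)
    (p : V → Fin d → ℂ)
    (hp : ∀ v (i : Fin d), p v i = q v i.castSucc / q v (Fin.last d))
    (u : V → Fin (d + 1) → ℂ)
    (htang : ∀ v, (∑ i, u v i * q v i) = 0)
    (φ : V → Fin d → ℂ)
    (hφ : ∀ v (i : Fin d), φ v i = u v i.castSucc / q v (Fin.last d)) :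
    ∀ v w, (∑ i, (p v i - p w i) * (φ v i - φ w i)) =
      -((∑ i, q v i * u w i) + ∑ i, q w i * u v i) /
        (q v (Fin.last d) * q w (Fin.last d)) := by
  intro v w
  set a := q v (Fin.last d) with ha
  set b := q w (Fin.last d) with hb
  have ha0 : a ≠ 0 := hlast v
  have hb0 : b ≠ 0 := hlast w
  have key : ∀ i : Fin d, (p v i - p w i) * (φ v i - φ w i) =
      ((q v i.castSucc * u v i.castSucc) * (b * b)
        - (q v i.castSucc * u w i.castSucc + q w i.castSucc * u v i.castSucc) * (a * b)
        + (q w i.castSucc * u w i.castSucc) * (a * a)) / (a * a * b * b) := by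
    intro i
    rw [hp, hp, hφ, hφ]
    rw [← ha, ← hb]
    field_simp
    ring
  rw [Finset.sum_congr rfl (fun i _ => key i), ← Finset.sum_div]
  have hT1 : ∑ i : Fin d, q v i.castSucc * u v i.castSucc = -(a * u v (Fin.last d)) := by
    have h := htang v
    rw [Fin.sum_univ_castSucc] at h
    rw [Finset.sum_congr rfl fun i _ => mul_comm (q v i.castSucc) (u v i.castSucc)]
    linear_combination h
  have hT2 : ∑ i : Fin d, q w i.castSucc * u w i.castSucc = -(b * u w (Fin.last d)) := by
    have h := htang w
    rw [Fin.sum_univ_castSucc] at h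
    rw [Finset.sum_congr rfl fun i _ => mul_comm (q w i.castSucc) (u w i.castSucc)]
    linear_combination h
  have hT3 : ∑ i : Fin d, q v i.castSucc * u w i.castSucc =
      (∑ i, q v i * u w i) - a * u w (Fin.last d) := by
    rw [Fin.sum_univ_castSucc (f := fun i => q v i * u w i)]; ring
  have hT4 : ∑ i : Fin d, q w i.castSucc * u v i.castSucc =
      (∑ i, q w i * u v i) - b * u v (Fin.last d) := by
    rw [Fin.sum_univ_castSucc (f := fun i => q w i * u v i)]; ring
  have hsplit : ∑ i : Fin d, ((q v i.castSucc * u v i.castSucc) * (b * b)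
        - (q v i.castSucc * u w i.castSucc + q w i.castSucc * u v i.castSucc) * (a * b)
        + (q w i.castSucc * u w i.castSucc) * (a * a))
      = (∑ i : Fin d, q v i.castSucc * u v i.castSucc) * (b * b)
        - ((∑ i : Fin d, q v i.castSucc * u w i.castSucc)
          + (∑ i : Fin d, q w i.castSucc * u v i.castSucc)) * (a * b)
        + (∑ i : Fin d, q w i.castSucc * u w i.castSucc) * (a * a) := by
    simp [Finset.sum_add_distrib, Finset.sum_sub_distrib, Finset.sum_mul, add_mul]
  rw [hsplit, hT1, hT2, hT3, hT4]
  field_simp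
  ring
end

section
/- If H is formed from a connected graph H₁ and a connected graph H₂, each with at least one edge, by gluing them at exactly one common vertex, then c₁(H) = 2·c₁(H₁)·c₁(H₂), where c₁ denotes the number of equivalence classes (modulo congruence) of 1-dimensional realisations with the same generic edge lengths. -/
/-- `p` and `q` are equivalent 1-dimensional realisations of `G`: equal edge lengths. -/
def Equivalent1D {V : Type*} (G : SimpleGraph V) (p q : V → ℝ) : Prop :=
  ∀ v w, G.Adj v w → |p v - p w| = |q v - q w|

/-- `p` and `q` are congruent realisations of the line: they differ by an isometry of `ℝ`. -/
def Congruent1D {V : Type*} (p q : V → ℝ) : Prop :=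
  ∃ ε c : ℝ, (ε = 1 ∨ ε = -1) ∧ ∀ v, q v = ε * p v + c

/-- The set of congruence classes of 1-dimensional realisations of `G` equivalent to `p`. -/
def RealisationClasses1D {V : Type*} (G : SimpleGraph V) (p : V → ℝ) :
    Set (Set (V → ℝ)) :=
  {C | ∃ q : V → ℝ, Equivalent1D G p q ∧ C = {q' | Congruent1D q q'}}

namespace Aux12

variable {W : Type*}

/-- normalized realisations -/
def NSet (G : SimpleGraph W) (f : W → ℝ) (b : W) : Set (W → ℝ) :=
  {q | Equivalent1D G f q ∧ q b = 0}

def classOf (q : W → ℝ) : Set (W → ℝ) := {q' | Congruent1D q q'}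

lemma cong_refl (q : W → ℝ) : Congruent1D q q :=
  ⟨1, 0, Or.inl rfl, fun v => by ring⟩

lemma cong_symm {q r : W → ℝ} (h : Congruent1D q r) : Congruent1D r q := by
  obtain ⟨ε, c, hε, h⟩ := h
  refine ⟨ε, -ε * c, hε, fun v => ?_⟩
  rcases hε with h1 | h1 <;> subst h1 <;> have := h v <;> linarith

lemma cong_trans {q r s : W → ℝ} (h1 : Congruent1D q r) (h2 : Congruent1D r s) :
    Congruent1D q s := by
  obtain ⟨ε, c, hε, h1⟩ := h1
  obtain ⟨δ, d, hδ, h2⟩ := h2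
  refine ⟨δ * ε, δ * c + d, ?_, fun v => ?_⟩
  · rcases hε with h | h <;> rcases hδ with h' | h' <;> simp [h, h']
  · rw [h2 v, h1 v]; ring

lemma classOf_eq {q r : W → ℝ} (h : Congruent1D q r) : classOf q = classOf r := by
  ext x
  exact ⟨fun hx => cong_trans (cong_symm h) hx, fun hx => cong_trans h hx⟩

lemma cong_of_classOf_eq {q r : W → ℝ} (h : classOf q = classOf r) : Congruent1D r q := by
  have : q ∈ classOf r := h ▸ cong_refl q
  exact this

section Finiteness

variable (G : SimpleGraph W) (f : W → ℝ)

def walkVals : ∀ {a c : W}, G.Walk a c → Set ℝ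
  | _, _, SimpleGraph.Walk.nil => {0}
  | _, _, SimpleGraph.Walk.cons (u := u) (v := v) _ w =>
      (fun x => (f v - f u) + x) '' walkVals w ∪ (fun x => (f u - f v) + x) '' walkVals w

lemma walkVals_finite : ∀ {a c : W} (w : G.Walk a c), (walkVals G f w).Finite
  | _, _, SimpleGraph.Walk.nil => Set.finite_singleton 0
  | _, _, SimpleGraph.Walk.cons _ w =>
      ((walkVals_finite w).image _).union ((walkVals_finite w).image _)

lemma mem_walkVals {q : W → ℝ} (hq : Equivalent1D G f q) :
    ∀ {a c : W} (w : G.Walk a c), q c - q a ∈ walkVals G f w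
  | _, _, SimpleGraph.Walk.nil => by simp [walkVals]
  | a, c, SimpleGraph.Walk.cons (v := v) h w => by
      have h1 : |f a - f v| = |q a - q v| := hq a v h
      have ih := mem_walkVals hq w
      rcases abs_eq_abs.mp h1 with h2 | h2
      · exact Or.inl ⟨q c - q v, ih, by dsimp only; linarith⟩
      · exact Or.inr ⟨q c - q v, ih, by dsimp only; linarith⟩

lemma NSet_finite [Finite W] (hconn : G.Preconnected) (b : W) :
    (NSet G f b).Finite := by
  have hw : ∀ v : W, ∃ w : G.Walk b v, True := fun v => ⟨(hconn b v).some, trivial⟩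
  choose wk _ using hw
  refine Set.Finite.subset (Set.Finite.pi (t := fun v => walkVals G f (wk v))
    (fun v => walkVals_finite G f _)) ?_
  rintro q ⟨hq, hb⟩ v _
  have := mem_walkVals G f hq (wk v)
  rwa [hb, sub_zero] at this

end Finiteness

section Counting

variable (G : SimpleGraph W) (f : W → ℝ) (b : W)

lemma classes_eq_image :
    RealisationClasses1D G f = classOf '' NSet G f b := by
  ext C
  constructor
  · rintro ⟨q, hq, rfl⟩
    refine ⟨fun v => q v - q b, ⟨fun v w h => by
      simpa using hq v w h, by simp⟩, ?_⟩
    exact (classOf_eq ⟨1, -q b, Or.inl rfl, fun v => by ring⟩).symm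
  · rintro ⟨q, hq, rfl⟩
    exact ⟨q, hq.1, rfl⟩

lemma neg_mem_NSet {q : W → ℝ} (hq : q ∈ NSet G f b) : (-q) ∈ NSet G f b := by
  refine ⟨fun v w h => ?_, by simp [hq.2]⟩
  rw [hq.1 v w h]
  simp [Pi.neg_apply]
  rw [← abs_neg]; ring_nf

lemma NSet_card_eq [Finite W] (hfin : (NSet G f b).Finite)
    (hedge : ∃ v w, G.Adj v w ∧ f v ≠ f w) :
    (NSet G f b).ncard = 2 * (RealisationClasses1D G f).ncard := by
  classical
  have hcl : RealisationClasses1D G f = classOf '' NSet G f b := classes_eq_image G f b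
  have tfin : (RealisationClasses1D G f).Finite := hcl ▸ hfin.image _
  set s : Finset (W → ℝ) := hfin.toFinset with hs
  set t : Finset (Set (W → ℝ)) := tfin.toFinset with ht
  have hmem : ∀ q ∈ s, classOf q ∈ t := by
    intro q hq
    rw [ht, Set.Finite.mem_toFinset, hcl]
    exact ⟨q, hfin.mem_toFinset.mp hq, rfl⟩
  have hcard : s.card = ∑ C ∈ t, (s.filter (fun q => classOf q = C)).card :=
    Finset.card_eq_sum_card_fiberwise hmem
  have hfib : ∀ C ∈ t, (s.filter (fun q => classOf q = C)).card = 2 := by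
    intro C hC
    rw [ht, Set.Finite.mem_toFinset, hcl] at hC
    obtain ⟨r, hr, rfl⟩ := hC
    have hrne : r ≠ -r := by
      obtain ⟨v, w, hadj, hne⟩ := hedge
      have h1 : |f v - f w| = |r v - r w| := hr.1 v w hadj
      have h2 : r v ≠ r w := by
        intro h
        rw [h, sub_self, abs_zero, abs_eq_zero, sub_eq_zero] at h1
        exact hne h1
      intro h
      have hv : r v = -r v := congrFun h v
      have hw : r w = -r w := congrFun h w
      have : r v = 0 := by linarith
      have : r w = 0 := by linarith
      exact h2 (by linarith)
    have hfilter : s.filter (fun q => classOf q = classOf r) = {r, -r} := by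
      ext q
      simp only [Finset.mem_filter, Finset.mem_insert, Finset.mem_singleton, hs,
        Set.Finite.mem_toFinset]
      constructor
      · rintro ⟨hqN, hqC⟩
        obtain ⟨ε, c, hε, hq⟩ := cong_of_classOf_eq hqC
        have hc : c = 0 := by have := hq b; rw [hqN.2, hr.2] at this; linarith
        rcases hε with h1 | h1
        · left; funext v; rw [hq v, h1, hc]; ring
        · right; funext v; rw [hq v, h1, hc]; simp
      · rintro (rfl | rfl)
        · exact ⟨hr, rfl⟩
        · exact ⟨neg_mem_NSet G f b hr,
            classOf_eq ⟨-1, 0, Or.inr rfl, fun v => by simp⟩⟩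
    rw [hfilter, Finset.card_insert_of_notMem (by simpa using hrne), Finset.card_singleton]
  rw [Set.ncard_eq_toFinset_card _ hfin, Set.ncard_eq_toFinset_card _ tfin]
  rw [hcard, Finset.sum_congr rfl hfib, Finset.sum_const, smul_eq_mul, mul_comm]

end Counting

end Aux12

open Aux12 in
/-- Gluing two connected graphs with at least one edge each at exactly one common vertex
doubles the product of their 1-dimensional realisation numbers:
`c₁(H) = 2 · c₁(H₁) · c₁(H₂)`. -/
theorem stmt12 {V : Type*} [Fintype V] (v₀ : V) (S₁ S₂ : Set V)
    (G₁ G₂ : SimpleGraph V)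
    (hcover : S₁ ∪ S₂ = Set.univ) (hinter : S₁ ∩ S₂ = {v₀})
    (hE1 : ∀ v w, G₁.Adj v w → v ∈ S₁ ∧ w ∈ S₁)
    (hE2 : ∀ v w, G₂.Adj v w → v ∈ S₂ ∧ w ∈ S₂)
    (hdisj : Disjoint G₁.edgeSet G₂.edgeSet)
    (hc1 : (SimpleGraph.induce S₁ G₁).Connected)
    (hc2 : (SimpleGraph.induce S₂ G₂).Connected)
    (he1 : G₁.edgeSet.Nonempty) (he2 : G₂.edgeSet.Nonempty)
    (p : V → ℝ) (hgen : AlgebraicIndependent ℚ p) :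
    (RealisationClasses1D (G₁ ⊔ G₂) p).ncard =
      2 * (RealisationClasses1D (SimpleGraph.induce S₁ G₁) (fun v => p v)).ncard *
        (RealisationClasses1D (SimpleGraph.induce S₂ G₂) (fun v => p v)).ncard := by
  classical
  have hv12 : v₀ ∈ S₁ ∩ S₂ := by rw [hinter]; exact rfl
  have hv1 : v₀ ∈ S₁ := hv12.1
  have hv2 : v₀ ∈ S₂ := hv12.2
  have pinj : Function.Injective p := hgen.injective
  have hmemU : ∀ v : V, v ∈ S₁ ∪ S₂ := fun v => by rw [hcover]; exact Set.mem_univ v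
  obtain ⟨v₁, w₁, hvw1⟩ : ∃ v w, G₁.Adj v w := by
    obtain ⟨e, he⟩ := he1
    induction e using Sym2.ind with
    | _ v w => exact ⟨v, w, he⟩
  obtain ⟨v₂, w₂, hvw2⟩ : ∃ v w, G₂.Adj v w := by
    obtain ⟨e, he⟩ := he2
    induction e using Sym2.ind with
    | _ v w => exact ⟨v, w, he⟩
  -- homomorphisms
  let hom1 : SimpleGraph.induce S₁ G₁ →g (G₁ ⊔ G₂) :=
    ⟨Subtype.val, fun {a b} h => (SimpleGraph.sup_adj _ _ _ _).mpr
      (Or.inl (SimpleGraph.comap_adj.mp h))⟩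
  let hom2 : SimpleGraph.induce S₂ G₂ →g (G₁ ⊔ G₂) :=
    ⟨Subtype.val, fun {a b} h => (SimpleGraph.sup_adj _ _ _ _).mpr
      (Or.inr (SimpleGraph.comap_adj.mp h))⟩
  have hpre : (G₁ ⊔ G₂).Preconnected := by
    have key : ∀ v : V, (G₁ ⊔ G₂).Reachable v v₀ := by
      intro v
      rcases hmemU v with h | h
      · exact (hc1.preconnected ⟨v, h⟩ ⟨v₀, hv1⟩).map hom1
      · exact (hc2.preconnected ⟨v, h⟩ ⟨v₀, hv2⟩).map hom2
    intro u v; exact (key u).trans (key v).symm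
  -- normalized sets
  set NH := NSet (G₁ ⊔ G₂) p v₀ with hNH
  set N1 := NSet (SimpleGraph.induce S₁ G₁) (fun v => p v.1) ⟨v₀, hv1⟩ with hN1
  set N2 := NSet (SimpleGraph.induce S₂ G₂) (fun v => p v.1) ⟨v₀, hv2⟩ with hN2
  have hHfin : NH.Finite := NSet_finite _ _ hpre v₀
  have h1fin : N1.Finite := NSet_finite _ _ hc1.preconnected _
  have h2fin : N2.Finite := NSet_finite _ _ hc2.preconnected _
  have hedgeH : ∃ v w, (G₁ ⊔ G₂).Adj v w ∧ p v ≠ p w :=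
    ⟨v₁, w₁, (SimpleGraph.sup_adj _ _ _ _).mpr (Or.inl hvw1),
      fun h => hvw1.ne (pinj h)⟩
  have hedge1 : ∃ v w : ↥S₁, (SimpleGraph.induce S₁ G₁).Adj v w ∧ p v.1 ≠ p w.1 :=
    ⟨⟨v₁, (hE1 _ _ hvw1).1⟩, ⟨w₁, (hE1 _ _ hvw1).2⟩, SimpleGraph.comap_adj.mpr hvw1,
      fun h => hvw1.ne (pinj h)⟩
  have hedge2 : ∃ v w : ↥S₂, (SimpleGraph.induce S₂ G₂).Adj v w ∧ p v.1 ≠ p w.1 :=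
    ⟨⟨v₂, (hE2 _ _ hvw2).1⟩, ⟨w₂, (hE2 _ _ hvw2).2⟩, SimpleGraph.comap_adj.mpr hvw2,
      fun h => hvw2.ne (pinj h)⟩
  have hH : NH.ncard = 2 * (RealisationClasses1D (G₁ ⊔ G₂) p).ncard :=
    NSet_card_eq _ _ _ hHfin hedgeH
  have hcard1 : N1.ncard =
      2 * (RealisationClasses1D (SimpleGraph.induce S₁ G₁) (fun v => p v.1)).ncard :=
    NSet_card_eq _ _ _ h1fin hedge1
  have hcard2 : N2.ncard =
      2 * (RealisationClasses1D (SimpleGraph.induce S₂ G₂) (fun v => p v.1)).ncard :=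
    NSet_card_eq _ _ _ h2fin hedge2
  -- the product bijection
  have hprod : NH.ncard = N1.ncard * N2.ncard := by
    set Φ : (V → ℝ) → ((↥S₁ → ℝ) × (↥S₂ → ℝ)) :=
      fun q => (fun v => q v.1, fun v => q v.1) with hΦ
    have hbij : Set.BijOn Φ NH (N1 ×ˢ N2) := by
      refine ⟨?_, ?_, ?_⟩
      · rintro q ⟨hq, hb⟩
        constructor
        · exact ⟨fun a b hab => hq a.1 b.1
            ((SimpleGraph.sup_adj _ _ _ _).mpr (Or.inl (SimpleGraph.comap_adj.mp hab))), hb⟩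
        · exact ⟨fun a b hab => hq a.1 b.1
            ((SimpleGraph.sup_adj _ _ _ _).mpr (Or.inr (SimpleGraph.comap_adj.mp hab))), hb⟩
      · rintro q hq q' hq' heq
        funext v
        rcases hmemU v with h | h
        · exact congrFun (congrArg Prod.fst heq) ⟨v, h⟩
        · exact congrFun (congrArg Prod.snd heq) ⟨v, h⟩
      · rintro ⟨q₁, q₂⟩ ⟨hq1, hq2⟩
        dsimp only at hq1 hq2
        set g : V → ℝ := fun v =>
          if h : v ∈ S₁ then q₁ ⟨v, h⟩ else q₂ ⟨v, (hmemU v).resolve_left h⟩ with hg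
        have gA : ∀ v (h : v ∈ S₁), g v = q₁ ⟨v, h⟩ := fun v h => dif_pos h
        have gB : ∀ v (h : v ∈ S₂), g v = q₂ ⟨v, h⟩ := by
          intro v h
          by_cases h' : v ∈ S₁
          · have hv : v = v₀ := by
              have : v ∈ S₁ ∩ S₂ := ⟨h', h⟩
              rw [hinter] at this; exact this
            rw [gA v h', show (⟨v, h'⟩ : ↥S₁) = ⟨v₀, hv1⟩ from Subtype.ext hv,
              show (⟨v, h⟩ : ↥S₂) = ⟨v₀, hv2⟩ from Subtype.ext hv, hq1.2, hq2.2]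
          · exact dif_neg h'
        refine ⟨g, ⟨fun v w hvw => ?_, by rw [gA v₀ hv1]; exact hq1.2⟩, ?_⟩
        · rcases (SimpleGraph.sup_adj _ _ _ _).mp hvw with hvw | hvw
          · rw [gA v (hE1 _ _ hvw).1, gA w (hE1 _ _ hvw).2]
            exact hq1.1 ⟨v, (hE1 _ _ hvw).1⟩ ⟨w, (hE1 _ _ hvw).2⟩
              (SimpleGraph.comap_adj.mpr hvw)
          · rw [gB v (hE2 _ _ hvw).1, gB w (hE2 _ _ hvw).2]
            exact hq2.1 ⟨v, (hE2 _ _ hvw).1⟩ ⟨w, (hE2 _ _ hvw).2⟩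
              (SimpleGraph.comap_adj.mpr hvw)
        · have h1 : (fun v : ↥S₁ => g v.1) = q₁ := by
            funext a; rw [gA a.1 a.2]
          have h2 : (fun v : ↥S₂ => g v.1) = q₂ := by
            funext a; rw [gB a.1 a.2]
          simp only [hΦ, h1, h2]
    calc NH.ncard = (Φ '' NH).ncard := (Set.ncard_image_of_injOn hbij.injOn).symm
      _ = (N1 ×ˢ N2).ncard := by rw [hbij.image_eq]
      _ = N1.ncard * N2.ncard := by
          rw [← Nat.card_coe_set_eq, ← Nat.card_coe_set_eq,
            ← Nat.card_coe_set_eq, Nat.card_congr (Equiv.Set.prod N1 N2),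
            Nat.card_prod]
  have final : 2 * (RealisationClasses1D (G₁ ⊔ G₂) p).ncard =
      2 * (2 * (RealisationClasses1D (SimpleGraph.induce S₁ G₁) (fun v => p v.1)).ncard *
        (RealisationClasses1D (SimpleGraph.induce S₂ G₂) (fun v => p v.1)).ncard) := by
    rw [← hH, hprod, hcard1, hcard2]; ring
  exact Nat.eq_of_mul_eq_mul_left (by norm_num) final
end

section
/- There exist four points p₁ = (0,0,0), p₂ = (1,0,0), p₃ = (2,1,i), p₄ = (0,1,0) in ℂ³ that affinely span ℂ³, such that no congruent copy of them (image under x ↦ Ax + t with A complex orthogonal, t ∈ ℂ³) satisfies the triangularisation condition that the j-th coordinate of the k-th point vanishes whenever j ≥ k. Specifically, the Gram matrix of {p₂ - p₁, p₃ - p₁, p₄ - p₁} with respect to the complex bilinear form, restricted to the first two vectors, has rank 1 even though p₂ - p₁ and p₃ - p₁ are linearly independent. -/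
open Matrix

/-- The four points of the counter-example to the converse of Lemma 3.2. -/
def cePts : Fin 4 → Fin 3 → ℂ :=
  ![![0, 0, 0], ![1, 0, 0], ![2, 1, Complex.I], ![0, 1, 0]]

/-- The points `(0,0,0), (1,0,0), (2,1,i), (0,1,0)` affinely span `ℂ³`, yet no congruent
copy of them satisfies the triangularisation condition; the Gram matrix of the first two
difference vectors is `!![1,2;2,4]`, which is singular even though the vectors are
linearly independent. -/
theorem stmt13 :
    affineSpan ℂ (Set.range cePts) = ⊤ ∧
    (¬ ∃ (A : Matrix (Fin 3) (Fin 3) ℂ) (t : Fin 3 → ℂ), Aᵀ * A = 1 ∧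
      ∀ (k : Fin 4) (j : Fin 3), (k : ℕ) ≤ (j : ℕ) → (A.mulVec (cePts k) + t) j = 0) ∧
    (∀ a b : Fin 2,
      (∑ i, ![cePts 1 - cePts 0, cePts 2 - cePts 0] a i *
        ![cePts 1 - cePts 0, cePts 2 - cePts 0] b i) = !![(1 : ℂ), 2; 2, 4] a b) ∧
    Matrix.det !![(1 : ℂ), 2; 2, 4] = 0 ∧
    LinearIndependent ℂ ![cePts 1 - cePts 0, cePts 2 - cePts 0] := by
  refine ⟨?_, ?_, ?_, ?_, ?_⟩
  · -- affine span is everything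
    rw [AffineSubspace.affineSpan_eq_top_iff_vectorSpan_eq_top_of_nonempty ℂ (Fin 3 → ℂ)
      (Fin 3 → ℂ) (Set.range_nonempty _)]
    have h1 : cePts 1 -ᵥ cePts 0 ∈ vectorSpan ℂ (Set.range cePts) :=
      vsub_mem_vectorSpan ℂ (Set.mem_range_self 1) (Set.mem_range_self 0)
    have h2 : cePts 2 -ᵥ cePts 0 ∈ vectorSpan ℂ (Set.range cePts) :=
      vsub_mem_vectorSpan ℂ (Set.mem_range_self 2) (Set.mem_range_self 0)
    have h3 : cePts 3 -ᵥ cePts 0 ∈ vectorSpan ℂ (Set.range cePts) :=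
      vsub_mem_vectorSpan ℂ (Set.mem_range_self 3) (Set.mem_range_self 0)
    rw [Submodule.eq_top_iff']
    intro x
    have hx : x = x 0 • (cePts 1 -ᵥ cePts 0) + x 1 • (cePts 3 -ᵥ cePts 0) +
        (-Complex.I * x 2) • ((cePts 2 -ᵥ cePts 0) - (2:ℂ) • (cePts 1 -ᵥ cePts 0)
          - (cePts 3 -ᵥ cePts 0)) := by
      funext j
      fin_cases j <;> simp [cePts] <;> ring_nf <;> simp [Complex.I_sq]
    rw [hx]
    exact Submodule.add_mem _ (Submodule.add_mem _ (Submodule.smul_mem _ _ h1)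
      (Submodule.smul_mem _ _ h3)) (Submodule.smul_mem _ _
      (Submodule.sub_mem _ (Submodule.sub_mem _ h2 (Submodule.smul_mem _ _ h1)) h3))
  · -- no congruent copy is triangular
    rintro ⟨A, t, hA, h⟩
    have ht1 := h 0 1 (by norm_num)
    have ht2 := h 0 2 (by norm_num)
    have h11 := h 1 1 (by norm_num)
    have h12 := h 1 2 (by norm_num)
    have h22 := h 2 2 (by norm_num)
    simp [cePts, Matrix.mulVec, dotProduct, Fin.sum_univ_three] at ht1 ht2 h11 h12 h22
    have e := fun i j => congrFun (congrFun hA i) j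
    simp only [Matrix.mul_apply, Matrix.transpose_apply, Fin.sum_univ_three,
      Matrix.one_apply] at e
    have e00 := e 0 0
    have e01 := e 0 1
    have e02 := e 0 2
    have e11 := e 1 1
    have e12 := e 1 2
    have e22 := e 2 2
    norm_num [show (0:Fin 3) ≠ 1 by decide, show (0:Fin 3) ≠ 2 by decide,
      show (1:Fin 3) ≠ 2 by decide] at e00 e01 e02 e11 e12 e22
    have hp : A 1 0 = 0 := by linear_combination h11 - ht1
    have hq : A 2 0 = 0 := by linear_combination h12 - ht2
    rw [hp, hq] at e00 e01 e02
    rw [hq] at h22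
    have ha : A 0 1 = 0 := by linear_combination A 0 0 * e01 - A 0 1 * e00
    have hd : A 0 2 = 0 := by linear_combination A 0 0 * e02 - A 0 2 * e00
    have hc : A 2 1 = -Complex.I * A 2 2 := by linear_combination h22 - ht2
    rw [ha, hc] at e11 e12
    rw [hd] at e12 e22
    have : (1:ℂ) = 0 := by
      linear_combination (A 1 1 * A 1 2 + Complex.I * A 2 2 ^ 2) * e12 -
        A 1 2 ^ 2 * e11 - (A 2 2 ^ 2 + 1) * e22 +
        (A 1 2 ^ 2 * A 2 2 ^ 2 + A 2 2 ^ 4) * Complex.I_sq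
    exact one_ne_zero this
  · -- Gram matrix computation
    intro a b
    fin_cases a <;> fin_cases b <;>
      simp [cePts, Fin.sum_univ_three, Complex.I_mul_I] <;> ring
  · -- singular determinant
    simp [Matrix.det_fin_two_of]; ring
  · -- linear independence
    rw [linearIndependent_fin2]
    constructor
    · intro h
      have := congrFun h 1
      simp [cePts] at this
    · intro a h
      have h1 := congrFun h 1
      have h2 := congrFun h 0
      simp [cePts] at h1 h2
      rw [h1] at h2
      norm_num at h2
end

section
/- Let u₁, ..., u_k ∈ ℂ^d be vectors and let A be the d×k matrix with columns u₁,...,u_{k-1}, and suppose u_k = y + z with y in the column span of A and z satisfying ‖z‖² = 0 and z·uⱼ = 0 for all j < k (with respect to the complex bilinear form). Then the Gram matrix (uᵢ·uⱼ)_{i,j=1}^{k} is singular. -/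
/-- If the last of the vectors `u₀,...,u_k` decomposes as `y + z` with `y` in the span of
the others and `z` isotropic (`‖z‖² = 0`) and orthogonal to the others (complex bilinear
form), then the Gram matrix of all the vectors is singular. -/
theorem stmt14 (d k : ℕ) (u : Fin (k + 1) → Fin d → ℂ) (y z : Fin d → ℂ)
    (hdecomp : u (Fin.last k) = y + z)
    (hy : y ∈ Submodule.span ℂ (Set.range fun j : Fin k => u j.castSucc))
    (hz : (∑ i, z i * z i) = 0)
    (horth : ∀ j : Fin k, (∑ i, z i * u j.castSucc i) = 0) :
    Matrix.det (Matrix.of fun a b : Fin (k + 1) => ∑ i, u a i * u b i) = 0 := by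
  rw [Submodule.mem_span_range_iff_exists_fun] at hy
  obtain ⟨c, hc⟩ := hy
  -- z is orthogonal to y
  have hzy : (∑ i, z i * y i) = 0 := by
    rw [← hc]
    simp only [Finset.sum_apply, Pi.smul_apply, smul_eq_mul, Finset.mul_sum]
    rw [Finset.sum_comm]
    refine Finset.sum_eq_zero fun j _ => ?_
    have := horth j
    calc (∑ i, z i * (c j * u j.castSucc i))
        = c j * ∑ i, z i * u j.castSucc i := by rw [Finset.mul_sum]; apply Finset.sum_congr rfl; intros; ring
      _ = 0 := by rw [horth j, mul_zero]
  -- z is orthogonal to every u b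
  have hzb : ∀ b : Fin (k + 1), (∑ i, z i * u b i) = 0 := by
    intro b
    induction b using Fin.lastCases with
    | last =>
        rw [hdecomp]
        simp only [Pi.add_apply, mul_add, Finset.sum_add_distrib, hzy, hz, add_zero]
    | cast j => exact horth j
  rw [← Matrix.exists_vecMul_eq_zero_iff]
  refine ⟨Fin.snoc (fun j => -c j) 1, ?_, ?_⟩
  · intro h
    have := congrFun h (Fin.last k)
    simp [Fin.snoc] at this
  · funext b
    simp only [Matrix.vecMul, dotProduct, Matrix.of_apply, Fin.sum_univ_castSucc,
      Fin.snoc_castSucc, Fin.snoc_last, one_mul, Pi.zero_apply]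
    rw [hdecomp]
    simp only [Pi.add_apply, add_mul, Finset.sum_add_distrib, hzb b, add_zero]
    rw [← hc]
    simp only [Finset.sum_apply, Pi.smul_apply, smul_eq_mul, Finset.sum_mul]
    rw [Finset.sum_comm]
    rw [← Finset.sum_add_distrib]
    refine Finset.sum_eq_zero fun j _ => ?_
    rw [neg_mul, Finset.mul_sum, neg_add_eq_zero]
    exact Finset.sum_congr rfl fun i _ => (mul_assoc _ _ _).symm
end
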